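/- Let A be the 3×3 matrix [[-a1,0,0],[g1,-a2,0],[0,g2,-a3]] with distinct constants a1,a2,a3>0 and gains g1,g2>0, B=(1,0,0)ᵀ, C=(0,0,1). Suppose the modulation functions Φ, F : ℝ → ℝ are bounded as 0 < Φ1 ≤ Φ(·) ≤ Φ2 and 0 < F1 ≤ F(·) ≤ F2. Then every orbit of the map Q(ξ) = exp(A·Φ(Cξ))·(ξ + F(Cξ)B) starting from a point with nonnegative components is bounded: there exists M (depending on the initial point) such that the sequence X_{n+1} = Q(X_n) satisfies ‖X_n‖ ≤ M for all n. -/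

import Mathlib

/-!
The matrix `A` is Metzler (nonnegative off the diagonal), so `exp (s • A)` is entrywise
nonnegative for `s ≥ 0` and `Q` maps the nonnegative orthant into itself. Moreover `A` has a
linear copositive Lyapunov function `V x = v ⬝ᵥ x`: a vector `v > 0` with `vᵀ A ≤ -c vᵀ` for
some `c > 0`. Comparing power series after shifting `A` to a nonnegative matrix gives
`vᵀ exp (s • A) ≤ e^{-c s} vᵀ`, hence `V (X (n+1)) ≤ e^{-c Φ1} (V (X n) + F2 V B)` along an orbit.
This contraction with bounded forcing keeps `V` bounded, and on the orthant `V` dominates the norm.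
-/

open Matrix

noncomputable section

/-- State matrix of the linear pharmacokinetic block. -/
def Amat (a1 a2 a3 g1 g2 : ℝ) : Matrix (Fin 3) (Fin 3) ℝ :=
  !![-a1, 0, 0; g1, -a2, 0; 0, g2, -a3]

/-- Input direction of the impulsive doses. -/
def Bvec : Fin 3 → ℝ := ![1, 0, 0]

/-- Output row vector. -/
def Cvec : Fin 3 → ℝ := ![0, 0, 1]

/-- The pointwise (stroboscopic) map of the hybrid pulse-modulated system. -/
def Qmap (a1 a2 a3 g1 g2 : ℝ) (Φ F : ℝ → ℝ) (ξ : Fin 3 → ℝ) : Fin 3 → ℝ :=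
  (NormedSpace.exp ((Φ (Cvec ⬝ᵥ ξ)) • Amat a1 a2 a3 g1 g2)).mulVec
    (ξ + F (Cvec ⬝ᵥ ξ) • Bvec)

open NormedSpace
open scoped Nat

namespace Matrix

variable {ι : Type*}

def IsMetzler (A : Matrix ι ι ℝ) : Prop := Pairwise fun i j => 0 ≤ A i j

lemma IsMetzler.transpose {A : Matrix ι ι ℝ} (hA : A.IsMetzler) : Aᵀ.IsMetzler :=
  fun _ _ hij => hA hij.symm

variable [Fintype ι]

lemma IsMetzler.exists_nonneg_add_smul_one [DecidableEq ι] {A : Matrix ι ι ℝ} (hA : A.IsMetzler)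
    (r : ℝ) : ∃ ρ, r ≤ ρ ∧ ∀ i j, 0 ≤ (A + ρ • 1) i j := by
  have hsum : ∀ i, |A i i| ≤ ∑ k, |A k k| := fun i =>
    Finset.single_le_sum (fun k _ => abs_nonneg (A k k)) (Finset.mem_univ i)
  refine ⟨|r| + ∑ k, |A k k|, ?_, fun i j => ?_⟩
  · linarith [le_abs_self r, Finset.sum_nonneg fun k (_ : k ∈ Finset.univ) => abs_nonneg (A k k)]
  rcases eq_or_ne i j with rfl | hij
  · simp only [add_apply, smul_apply, one_apply_eq, smul_eq_mul, mul_one]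
    linarith [neg_abs_le (A i i), abs_nonneg r, hsum i]
  · simpa [one_apply_ne hij] using hA hij

lemma mulVec_nonneg {N : Matrix ι ι ℝ} (hN : ∀ i j, 0 ≤ N i j) {x : ι → ℝ} (hx : 0 ≤ x) :
    0 ≤ N *ᵥ x :=
  fun i => dotProduct_nonneg_of_nonneg (hN i) hx

lemma mulVec_mono {N : Matrix ι ι ℝ} (hN : ∀ i j, 0 ≤ N i j) {x y : ι → ℝ} (hxy : x ≤ y) :
    N *ᵥ x ≤ N *ᵥ y :=
  fun i => dotProduct_le_dotProduct_of_nonneg_left hxy (hN i)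

variable [DecidableEq ι]

lemma pow_mulVec_nonneg {N : Matrix ι ι ℝ} (hN : ∀ i j, 0 ≤ N i j) {x : ι → ℝ} (hx : 0 ≤ x)
    (k : ℕ) : 0 ≤ N ^ k *ᵥ x := by
  induction k with
  | zero => simpa using hx
  | succ k ih => rw [pow_succ', ← mulVec_mulVec]; exact mulVec_nonneg hN ih

lemma pow_mulVec_le {N : Matrix ι ι ℝ} (hN : ∀ i j, 0 ≤ N i j) {v : ι → ℝ} {μ : ℝ} (hμ : 0 ≤ μ)
    (hv : N *ᵥ v ≤ μ • v) (k : ℕ) : N ^ k *ᵥ v ≤ μ ^ k • v := by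
  induction k with
  | zero => simp
  | succ k ih =>
    calc N ^ (k + 1) *ᵥ v = N *ᵥ (N ^ k *ᵥ v) := by rw [pow_succ', mulVec_mulVec]
      _ ≤ N *ᵥ (μ ^ k • v) := mulVec_mono hN ih
      _ = μ ^ k • (N *ᵥ v) := mulVec_smul _ _ _
      _ ≤ μ ^ k • μ • v := smul_le_smul_of_nonneg_left hv (pow_nonneg hμ k)
      _ = μ ^ (k + 1) • v := by rw [smul_smul, pow_succ]

lemma hasSum_exp_mulVec (X : Matrix ι ι ℝ) (x : ι → ℝ) :
    HasSum (fun k => (k !⁻¹ : ℝ) • (X ^ k *ᵥ x)) (exp X *ᵥ x) := by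
  have h : HasSum (fun k => (k !⁻¹ : ℝ) • X ^ k) (exp X) := by
    open scoped Norms.Operator in exact exp_series_hasSum_exp' X
  convert h.map (mulVec.addMonoidHomLeft x) (continuous_id.matrix_mulVec continuous_const) using 1
  · ext k : 1
    exact (smul_mulVec (k !⁻¹ : ℝ) (X ^ k) x).symm
  · rfl

lemma exp_mulVec_nonneg {N : Matrix ι ι ℝ} (hN : ∀ i j, 0 ≤ N i j) {x : ι → ℝ} (hx : 0 ≤ x) :
    0 ≤ exp N *ᵥ x :=
  (hasSum_exp_mulVec N x).nonneg fun k =>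
    smul_nonneg (by positivity) (pow_mulVec_nonneg hN hx k)

lemma exp_mulVec_le {N : Matrix ι ι ℝ} (hN : ∀ i j, 0 ≤ N i j) {v : ι → ℝ} {μ : ℝ} (hμ : 0 ≤ μ)
    (hv : N *ᵥ v ≤ μ • v) : exp N *ᵥ v ≤ Real.exp μ • v := by
  have hμv : HasSum (fun k => (k !⁻¹ : ℝ) • μ ^ k • v) (Real.exp μ • v) := by
    simpa [smul_smul, Real.exp_eq_exp_ℝ] using (exp_series_hasSum_exp' (𝕂 := ℝ) μ).smul_const v
  exact hasSum_le (fun k => smul_le_smul_of_nonneg_left (pow_mulVec_le hN hμ hv k)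
    (by positivity)) (hasSum_exp_mulVec N v) hμv

lemma exp_add_smul_one (X : Matrix ι ι ℝ) (t : ℝ) :
    exp (X + t • 1) = Real.exp t • exp X := by
  have hexp : exp (algebraMap ℝ (Matrix ι ι ℝ) t) = algebraMap ℝ _ (Real.exp t) := by
    open scoped Norms.Operator in
    rw [Real.exp_eq_exp_ℝ]; exact (algebraMap_exp_comm (𝔸 := Matrix ι ι ℝ) t).symm
  rw [Matrix.exp_add_of_commute _ _ ((Commute.one_right X).smul_right t),
    ← Algebra.algebraMap_eq_smul_one, hexp, Algebra.algebraMap_eq_smul_one, mul_smul_comm, mul_one]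

lemma exp_smul_eq_exp_smul_add_smul_one (A : Matrix ι ι ℝ) (s ρ : ℝ) :
    exp (s • A) = Real.exp (-(s * ρ)) • exp (s • (A + ρ • 1)) := by
  rw [← exp_add_smul_one]
  congr 1
  module

namespace IsMetzler

variable {A : Matrix ι ι ℝ} {s : ℝ}

lemma exp_smul_mulVec_nonneg (hA : A.IsMetzler) (hs : 0 ≤ s) {x : ι → ℝ} (hx : 0 ≤ x) :
    0 ≤ exp (s • A) *ᵥ x := by
  obtain ⟨ρ, -, hρ⟩ := hA.exists_nonneg_add_smul_one 0
  rw [exp_smul_eq_exp_smul_add_smul_one A s ρ, smul_mulVec]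
  exact smul_nonneg (Real.exp_pos _).le
    (exp_mulVec_nonneg (fun i j => mul_nonneg hs (hρ i j)) hx)

lemma vecMul_exp_smul_le (hA : A.IsMetzler) (hs : 0 ≤ s) {v : ι → ℝ} {c : ℝ}
    (hv : v ᵥ* A ≤ -c • v) : v ᵥ* exp (s • A) ≤ Real.exp (-(c * s)) • v := by
  obtain ⟨ρ, hcρ, hρ⟩ := hA.transpose.exists_nonneg_add_smul_one c
  have hN : (s • (Aᵀ + ρ • 1)) *ᵥ v ≤ (s * (ρ - c)) • v := by
    rw [smul_mulVec, add_mulVec, mulVec_transpose, smul_mulVec, one_mulVec, mul_smul]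
    gcongr
    calc v ᵥ* A + ρ • v ≤ -c • v + ρ • v := by gcongr
      _ = (ρ - c) • v := by module
  rw [← mulVec_transpose, ← exp_transpose, transpose_smul,
    exp_smul_eq_exp_smul_add_smul_one Aᵀ s ρ, smul_mulVec]
  calc Real.exp (-(s * ρ)) • exp (s • (Aᵀ + ρ • 1)) *ᵥ v
      ≤ Real.exp (-(s * ρ)) • Real.exp (s * (ρ - c)) • v := by
        gcongr
        exact exp_mulVec_le (fun i j => mul_nonneg hs (hρ i j)) (by nlinarith) hN
    _ = Real.exp (-(c * s)) • v := by rw [smul_smul, ← Real.exp_add]; ring_nf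

end IsMetzler

end Matrix

lemma le_max_of_le_mul_add {u : ℕ → ℝ} {r D : ℝ} (hr₀ : 0 ≤ r) (hr₁ : r < 1)
    (hu : ∀ n, u (n + 1) ≤ r * (u n + D)) (n : ℕ) : u n ≤ max (u 0) (r * D / (1 - r)) := by
  set K := max (u 0) (r * D / (1 - r))
  have hK : r * (K + D) ≤ K := by
    have := le_max_right (u 0) (r * D / (1 - r))
    rw [div_le_iff₀ (by linarith)] at this
    linarith
  induction n with
  | zero => exact le_max_left _ _
  | succ n ih => exact (hu n).trans (le_trans (by gcongr) hK)

lemma exists_norm_le_mul_dotProduct {ι : Type*} [Fintype ι] {v : ι → ℝ} (hv : ∀ i, 0 < v i) :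
    ∃ C, 0 ≤ C ∧ ∀ x : ι → ℝ, 0 ≤ x → ‖x‖ ≤ C * (v ⬝ᵥ x) := by
  have hinv : ∀ i, 0 ≤ (v i)⁻¹ := fun i => (inv_pos.2 (hv i)).le
  refine ⟨∑ i, (v i)⁻¹, Finset.sum_nonneg fun i _ => hinv i, fun x hx => ?_⟩
  have hvx : 0 ≤ v ⬝ᵥ x := dotProduct_nonneg_of_nonneg (fun i => (hv i).le) hx
  refine (pi_norm_le_iff_of_nonneg (mul_nonneg (Finset.sum_nonneg fun i _ => hinv i) hvx)).2
    fun i => ?_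
  rw [Real.norm_of_nonneg (hx i)]
  calc x i = (v i)⁻¹ * (v i * x i) := by field_simp [(hv i).ne']
    _ ≤ (v i)⁻¹ * (v ⬝ᵥ x) := mul_le_mul_of_nonneg_left (Finset.single_le_sum
          (f := fun j => v j * x j) (fun j _ => mul_nonneg (hv j).le (hx j)) (Finset.mem_univ i))
          (hinv i)
    _ ≤ (∑ j, (v j)⁻¹) * (v ⬝ᵥ x) := by
        gcongr
        exact Finset.single_le_sum (fun j _ => hinv j) (Finset.mem_univ i)

section PulseModulated

variable {ι : Type*} [Fintype ι] [DecidableEq ι] {A : Matrix ι ι ℝ} {b : ι → ℝ}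
  {Φ F : (ι → ℝ) → ℝ}

def pulseMap (A : Matrix ι ι ℝ) (b : ι → ℝ) (Φ F : (ι → ℝ) → ℝ) (x : ι → ℝ) : ι → ℝ :=
  exp (Φ x • A) *ᵥ (x + F x • b)

lemma pulseMap_nonneg (hA : A.IsMetzler) (hb : 0 ≤ b) (hΦ : ∀ x, 0 ≤ Φ x) (hF : ∀ x, 0 ≤ F x)
    {x : ι → ℝ} (hx : 0 ≤ x) : 0 ≤ pulseMap A b Φ F x :=
  hA.exp_smul_mulVec_nonneg (hΦ x) (add_nonneg hx (smul_nonneg (hF x) hb))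

lemma dotProduct_pulseMap_le (hA : A.IsMetzler) {v : ι → ℝ} (hv : 0 ≤ v) {c : ℝ} (hc : 0 ≤ c)
    (hvA : v ᵥ* A ≤ -c • v) (hb : 0 ≤ b) {Φ₁ F₂ : ℝ} (hΦ₁ : 0 ≤ Φ₁) (hΦ : ∀ x, Φ₁ ≤ Φ x)
    (hF : ∀ x, 0 ≤ F x ∧ F x ≤ F₂) {x : ι → ℝ} (hx : 0 ≤ x) :
    v ⬝ᵥ pulseMap A b Φ F x ≤ Real.exp (-(c * Φ₁)) * (v ⬝ᵥ x + F₂ * (v ⬝ᵥ b)) := by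
  have hw : 0 ≤ x + F x • b := add_nonneg hx (smul_nonneg (hF x).1 hb)
  have hvb : 0 ≤ v ⬝ᵥ b := dotProduct_nonneg_of_nonneg hv hb
  calc v ⬝ᵥ pulseMap A b Φ F x = (v ᵥ* exp (Φ x • A)) ⬝ᵥ (x + F x • b) := dotProduct_mulVec _ _ _
    _ ≤ (Real.exp (-(c * Φ x)) • v) ⬝ᵥ (x + F x • b) :=
        dotProduct_le_dotProduct_of_nonneg_right
          (hA.vecMul_exp_smul_le (hΦ₁.trans (hΦ x)) hvA) hw
    _ = Real.exp (-(c * Φ x)) * (v ⬝ᵥ x + F x * (v ⬝ᵥ b)) := by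
        rw [smul_dotProduct, dotProduct_add, dotProduct_smul, smul_eq_mul, smul_eq_mul]
    _ ≤ Real.exp (-(c * Φ₁)) * (v ⬝ᵥ x + F₂ * (v ⬝ᵥ b)) := by
        gcongr
        · exact add_nonneg (dotProduct_nonneg_of_nonneg hv hx) (mul_nonneg (hF x).1 hvb)
        · exact hΦ x
        · exact (hF x).2

theorem exists_norm_iterate_pulseMap_le (hA : A.IsMetzler) {v : ι → ℝ} (hv : ∀ i, 0 < v i)
    {c : ℝ} (hc : 0 < c) (hvA : v ᵥ* A ≤ -c • v) (hb : 0 ≤ b) {Φ₁ F₂ : ℝ} (hΦ₁ : 0 < Φ₁)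
    (hΦ : ∀ x, Φ₁ ≤ Φ x) (hF : ∀ x, 0 ≤ F x ∧ F x ≤ F₂) {x₀ : ι → ℝ} (hx₀ : 0 ≤ x₀) :
    ∃ M, ∀ n, ‖(pulseMap A b Φ F)^[n] x₀‖ ≤ M := by
  have hnonneg : ∀ n, 0 ≤ (pulseMap A b Φ F)^[n] x₀ := fun n =>
    Set.MapsTo.iterate (s := Set.Ici 0) (fun _ hx => Set.mem_Ici.2 <| pulseMap_nonneg hA hb
      (fun x => hΦ₁.le.trans (hΦ x)) (fun x => (hF x).1) hx) n (Set.mem_Ici.2 hx₀)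
  set r := Real.exp (-(c * Φ₁))
  have hr : r < 1 := Real.exp_lt_one_iff.2 (by nlinarith)
  have hstep (n : ℕ) : v ⬝ᵥ (pulseMap A b Φ F)^[n + 1] x₀ ≤
      r * (v ⬝ᵥ (pulseMap A b Φ F)^[n] x₀ + F₂ * (v ⬝ᵥ b)) := by
    rw [Function.iterate_succ_apply']
    exact dotProduct_pulseMap_le hA (fun i => (hv i).le) hc.le hvA hb hΦ₁.le hΦ hF (hnonneg n)
  obtain ⟨C, hC₀, hC⟩ := exists_norm_le_mul_dotProduct hv
  exact ⟨_, fun n => (hC _ (hnonneg n)).trans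
    (mul_le_mul_of_nonneg_left (le_max_of_le_mul_add
      (u := fun n => v ⬝ᵥ (pulseMap A b Φ F)^[n] x₀) (Real.exp_pos _).le hr hstep n) hC₀)⟩

end PulseModulated

section Dosing

variable {a1 a2 a3 g1 g2 : ℝ}

lemma Amat_isMetzler (hg1 : 0 ≤ g1) (hg2 : 0 ≤ g2) : (Amat a1 a2 a3 g1 g2).IsMetzler := by
  intro i j hij
  fin_cases i <;> fin_cases j <;> simp_all [Amat]

lemma Bvec_nonneg : 0 ≤ Bvec := by
  intro i
  fin_cases i <;> simp [Bvec]

-- Chosen backwards from the last compartment so that each gain `g_k` cancels half of the decay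
-- rate of the compartment it drains.
def lyapunovWeight (a1 a2 g1 g2 : ℝ) : Fin 3 → ℝ := ![4 * g1 * g2 / (a1 * a2), 2 * g2 / a2, 1]

lemma lyapunovWeight_pos (ha1 : 0 < a1) (ha2 : 0 < a2) (hg1 : 0 < g1) (hg2 : 0 < g2) (i : Fin 3) :
    0 < lyapunovWeight a1 a2 g1 g2 i := by
  fin_cases i
  · show 0 < 4 * g1 * g2 / (a1 * a2)
    positivity
  · show 0 < 2 * g2 / a2
    positivity
  · exact one_pos

lemma lyapunovWeight_vecMul_Amat (ha1 : a1 ≠ 0) (ha2 : a2 ≠ 0) :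
    lyapunovWeight a1 a2 g1 g2 ᵥ* Amat a1 a2 a3 g1 g2 =
      -(![a1 / 2, a2 / 2, a3] * lyapunovWeight a1 a2 g1 g2) := by
  ext j
  fin_cases j <;>
    simp only [vecMul, dotProduct, Fin.sum_univ_three, Amat, lyapunovWeight, of_apply, cons_val',
      cons_val_zero, cons_val_one, cons_val, cons_val_fin_one, Pi.neg_apply, Pi.mul_apply,
      Fin.zero_eta, Fin.mk_one, Fin.reduceFinMk] <;>
    field_simp <;> ring

lemma lyapunovWeight_vecMul_Amat_le (ha1 : 0 < a1) (ha2 : 0 < a2) (hg1 : 0 < g1) (hg2 : 0 < g2)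
    {c : ℝ} (hc1 : c ≤ a1 / 2) (hc2 : c ≤ a2 / 2) (hc3 : c ≤ a3) :
    lyapunovWeight a1 a2 g1 g2 ᵥ* Amat a1 a2 a3 g1 g2 ≤ -c • lyapunovWeight a1 a2 g1 g2 := by
  rw [lyapunovWeight_vecMul_Amat ha1.ne' ha2.ne']
  intro j
  have hcj : c ≤ ![a1 / 2, a2 / 2, a3] j := by
    fin_cases j
    exacts [hc1, hc2, hc3]
  simpa using mul_le_mul_of_nonneg_right hcj (lyapunovWeight_pos ha1 ha2 hg1 hg2 j).le

end Dosing

lemma Qmap_eq_pulseMap (a1 a2 a3 g1 g2 : ℝ) (Φ F : ℝ → ℝ) :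
    Qmap a1 a2 a3 g1 g2 Φ F =
      pulseMap (Amat a1 a2 a3 g1 g2) Bvec (fun ξ => Φ (Cvec ⬝ᵥ ξ)) (fun ξ => F (Cvec ⬝ᵥ ξ)) :=
  rfl

theorem stmt11_general (a1 a2 a3 g1 g2 : ℝ) (ha1 : 0 < a1) (ha2 : 0 < a2) (ha3 : 0 < a3)
    (hg1 : 0 < g1) (hg2 : 0 < g2)
    (Φ F : ℝ → ℝ) (Φ1 Φ2 F1 F2 : ℝ) (hΦ1 : 0 < Φ1) (hF1 : 0 < F1)
    (hΦbd : ∀ y : ℝ, Φ1 ≤ Φ y ∧ Φ y ≤ Φ2) (hFbd : ∀ y : ℝ, F1 ≤ F y ∧ F y ≤ F2)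
    (X0 : Fin 3 → ℝ) (hX0 : ∀ i, 0 ≤ X0 i) :
    ∃ M : ℝ, ∀ n : ℕ, ‖(Qmap a1 a2 a3 g1 g2 Φ F)^[n] X0‖ ≤ M := by
  set c := min (min (a1 / 2) (a2 / 2)) a3
  have hc : 0 < c := lt_min (lt_min (half_pos ha1) (half_pos ha2)) ha3
  have hvA := lyapunovWeight_vecMul_Amat_le ha1 ha2 hg1 hg2 (a3 := a3) (c := c)
    ((min_le_left _ _).trans (min_le_left _ _)) ((min_le_left _ _).trans (min_le_right _ _))
    (min_le_right _ _)
  rw [Qmap_eq_pulseMap]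
  exact exists_norm_iterate_pulseMap_le (Amat_isMetzler hg1.le hg2.le)
    (lyapunovWeight_pos ha1 ha2 hg1 hg2) hc hvA Bvec_nonneg hΦ1 (fun _ => (hΦbd _).1)
    (fun _ => ⟨hF1.le.trans (hFbd _).1, (hFbd _).2⟩) hX0

/-- if the modulation functions obey the bounds
`0 < Φ1 ≤ Φ(·) ≤ Φ2` and `0 < F1 ≤ F(·) ≤ F2`, then every orbit `X_{n+1} = Q(X_n)`
starting from a point with nonnegative components is bounded. -/
theorem stmt11 (a1 a2 a3 g1 g2 : ℝ) (ha1 : 0 < a1) (ha2 : 0 < a2) (ha3 : 0 < a3)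
    (h12 : a1 ≠ a2) (h13 : a1 ≠ a3) (h23 : a2 ≠ a3) (hg1 : 0 < g1) (hg2 : 0 < g2)
    (Φ F : ℝ → ℝ) (Φ1 Φ2 F1 F2 : ℝ) (hΦ1 : 0 < Φ1) (hF1 : 0 < F1)
    (hΦbd : ∀ y : ℝ, Φ1 ≤ Φ y ∧ Φ y ≤ Φ2) (hFbd : ∀ y : ℝ, F1 ≤ F y ∧ F y ≤ F2)
    (X0 : Fin 3 → ℝ) (hX0 : ∀ i, 0 ≤ X0 i) :
    ∃ M : ℝ, ∀ n : ℕ, ‖(Qmap a1 a2 a3 g1 g2 Φ F)^[n] X0‖ ≤ M :=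
  stmt11_general a1 a2 a3 g1 g2 ha1 ha2 ha3 hg1 hg2 Φ F Φ1 Φ2 F1 F2 hΦ1 hF1 hΦbd hFbd X0 hX0
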